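/- Exponential eñe convolution formula: under the same radius conditions as the Pincherle formula, (F ⋆ₑ G)(z) = −(1/2πi) ∫_{|u|=r} F′(u) G(z/u) du. -/

import Mathlib

/-!
The Euler operator `θF(u) = u F'(u)` has coefficients `n Aₙ`, so
`∮ F'(u) G(z/u) du = ∮ θF(u) G(z/u) du/u` is `2πi` times the Hadamard product of `θF` and `G`
(Pincherle's formula). Pincherle's formula itself comes from expanding both factors on the circle
and integrating the absolutely convergent double series termwise: since `∮ uᵏ du/u = 2πi [k = 0]`,
only the diagonal terms survive.
-/

open Complex Metric FormalMultilinearSeries Real Set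
open scoped NNReal ENNReal

section PowerSeries

variable {𝕜 : Type*} [RCLike 𝕜] {f : 𝕜 → 𝕜} {a : ℕ → 𝕜} {R : ℝ}

theorem le_radius_ofScalars_of_forall_summable
    (h : ∀ w : 𝕜, ‖w‖ < R → Summable fun n => a n * w ^ n) :
    ENNReal.ofReal R ≤ (ofScalars 𝕜 a).radius := by
  refine ENNReal.le_of_forall_nnreal_lt fun s hs =>
    (ofScalars 𝕜 a).le_radius_of_tendsto (l := 0) ?_
  have hsR : (s : ℝ) < R := by simpa using hs
  simpa [ofScalars_norm] using (h ((s : ℝ) : 𝕜) (by simpa using hsR)).tendsto_atTop_zero.norm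

theorem summable_norm_mul_pow_of_forall_summable
    (h : ∀ w : 𝕜, ‖w‖ < R → Summable fun n => a n * w ^ n) {s : ℝ} (hs : 0 ≤ s) (hsR : s < R) :
    Summable fun n => ‖a n‖ * s ^ n := by
  lift s to ℝ≥0 using hs
  simpa [ofScalars_norm] using (ofScalars 𝕜 a).summable_norm_mul_pow
    ((ENNReal.coe_lt_ofReal.2 hsR).trans_le (le_radius_ofScalars_of_forall_summable h))

theorem hasFPowerSeriesOnBall_ofScalars_of_forall_hasSum (hR : 0 < R)
    (h : ∀ w : 𝕜, ‖w‖ < R → HasSum (fun n => a n * w ^ n) (f w)) :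
    HasFPowerSeriesOnBall f (ofScalars 𝕜 a) 0 (ENNReal.ofReal R) where
  r_le := le_radius_ofScalars_of_forall_summable fun w hw => (h w hw).summable
  r_pos := ENNReal.ofReal_pos.2 hR
  hasSum hy := by
    simpa [ofScalars_apply_eq, mul_comm] using h _ (by simpa using hy)

theorem hasSum_mul_deriv_of_forall_hasSum
    (h : ∀ w : 𝕜, ‖w‖ < R → HasSum (fun n => a n * w ^ n) (f w)) {u : 𝕜} (hu : ‖u‖ < R) :
    HasSum (fun n => n * a n * u ^ n) (u * deriv f u) := by
  have hp :=
    (hasFPowerSeriesOnBall_ofScalars_of_forall_hasSum ((norm_nonneg u).trans_lt hu) h).fderiv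
  have hd := (ContinuousLinearMap.apply 𝕜 𝕜 u).hasSum (hp.hasSum (y := u) (by simpa using hu))
  have hterm (n : ℕ) :
      (ofScalars 𝕜 a).derivSeries n (fun _ => u) u = (n + 1 : ℕ) * a (n + 1) * u ^ (n + 1) := by
    rw [derivSeries_apply_diag, ofScalars_apply_eq, nsmul_eq_mul, smul_eq_mul, mul_assoc]
  rw [← hasSum_nat_add_iff' 1]
  simp only [ContinuousLinearMap.apply_apply, hterm, zero_add] at hd
  simpa [fderiv_eq_smul_deriv] using hd

end PowerSeries

theorem hasSum_circleIntegral_of_dominated {E ι : Type*} [NormedAddCommGroup E] [NormedSpace ℂ E]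
    [Countable ι] {f : ι → ℂ → E} {g : ℂ → E} {c : ℂ} {R : ℝ} (bound : ι → ℝ)
    (hf : ∀ i, ContinuousOn (f i) (sphere c |R|))
    (hf_le : ∀ i, ∀ w ∈ sphere c |R|, ‖f i w‖ ≤ bound i) (h_sum : Summable bound)
    (hg : ∀ w ∈ sphere c |R|, HasSum (fun i => f i w) (g w)) :
    HasSum (fun i => ∮ w in C(c, R), f i w) (∮ w in C(c, R), g w) := by
  refine intervalIntegral.hasSum_integral_of_dominated_convergence (fun i _ => |R| * bound i)
    (fun i => ?_) (fun i => .of_forall fun θ _ => ?_) (.of_forall fun _ _ => h_sum.mul_left |R|)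
    intervalIntegrable_const (.of_forall fun θ _ => ?_)
  · simp only [deriv_circleMap]
    exact ((continuous_circleMap 0 R).mul continuous_const).aestronglyMeasurable.smul
      (hf i).circleIntegrable'.def'.1
  · rw [norm_smul, deriv_circleMap, norm_mul, norm_I, mul_one, norm_circleMap_zero]
    exact mul_le_mul_of_nonneg_left (hf_le i _ (circleMap_mem_sphere' c R θ)) (abs_nonneg R)
  · exact (hg _ (circleMap_mem_sphere' c R θ)).const_smul _

theorem circleIntegral_pow_mul_div_pow_div {R : ℝ} (hR : 0 < R) (z : ℂ) (n m : ℕ) :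
    (∮ u in C(0, R), u ^ n * (z / u) ^ m / u) = if n = m then 2 * π * I * z ^ n else 0 := by
  have hzpow : EqOn (fun u : ℂ => u ^ n * (z / u) ^ m / u)
      (fun u => z ^ m * (u - 0) ^ ((n : ℤ) - m - 1)) (sphere 0 R) := by
    intro u hu
    have hu0 : u ≠ 0 := ne_of_mem_sphere hu hR.ne'
    simp only [sub_zero, zpow_sub₀ hu0, zpow_natCast, zpow_one, div_pow]
    field_simp
  rw [circleIntegral.integral_congr hR.le hzpow, circleIntegral.integral_const_mul]
  split_ifs with hnm
  · subst hnm
    simp only [sub_self, zero_sub, zpow_neg_one]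
    rw [circleIntegral.integral_sub_center_inv 0 hR.ne']
    ring
  · rw [circleIntegral.integral_sub_zpow_of_ne (by omega), mul_zero]

theorem hasSum_circleIntegral_mul_comp_div {F G : ℂ → ℂ} {A B : ℕ → ℂ} {RF RG r : ℝ} {z : ℂ}
    (hr : 0 < r) (hrF : r < RF) (hz : ‖z‖ < r * RG)
    (hF : ∀ w : ℂ, ‖w‖ < RF → HasSum (fun n => A n * w ^ n) (F w))
    (hG : ∀ w : ℂ, ‖w‖ < RG → HasSum (fun n => B n * w ^ n) (G w)) :
    HasSum (fun nm : ℕ × ℕ => ∮ u in C(0, r), A nm.1 * u ^ nm.1 * (B nm.2 * (z / u) ^ nm.2) / u)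
      (∮ u in C(0, r), F u * G (z / u) / u) := by
  have hzr : ‖z‖ / r < RG := (div_lt_iff₀ hr).2 (by linarith)
  have hA := summable_norm_mul_pow_of_forall_summable (fun w hw => (hF w hw).summable) hr.le hrF
  have hB := summable_norm_mul_pow_of_forall_summable (fun w hw => (hG w hw).summable)
    (by positivity) hzr
  have hsphere : ∀ u ∈ sphere (0 : ℂ) |r|, ‖u‖ = r := by simp [abs_of_pos hr]
  refine hasSum_circleIntegral_of_dominated
    (fun nm => ‖A nm.1‖ * r ^ nm.1 * (‖B nm.2‖ * (‖z‖ / r) ^ nm.2) / r) (fun nm => ?_)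
    (fun nm u hu => by simp [hsphere u hu])
    ((hA.mul_of_nonneg hB (fun _ => by positivity) (fun _ => by positivity)).div_const r)
    (fun u hu => ?_)
  · have hu0 : ∀ u ∈ sphere (0 : ℂ) |r|, u ≠ 0 := fun u hu => ne_of_mem_sphere hu (by positivity)
    exact ((continuousOn_const.mul (continuousOn_pow _)).mul (continuousOn_const.mul
      ((continuousOn_const.div continuousOn_id hu0).pow _))).div continuousOn_id hu0
  · have hFu := hF u (by rw [hsphere u hu]; exact hrF)
    have hGu := hG (z / u) (by rw [norm_div, hsphere u hu]; exact hzr)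
    have hFGu : Summable fun nm : ℕ × ℕ => A nm.1 * u ^ nm.1 * (B nm.2 * (z / u) ^ nm.2) :=
      summable_mul_of_summable_norm (f := fun n => A n * u ^ n)
        (g := fun m => B m * (z / u) ^ m) (by simpa [hsphere u hu] using hA)
        (by simpa [hsphere u hu] using hB)
    exact (hFu.mul hGu hFGu).div_const u

/-- Pincherle's formula for the Hadamard product `∑ Aₙ Bₙ zⁿ`. -/
theorem hasSum_mul_mul_pow_eq_circleIntegral {F G : ℂ → ℂ} {A B : ℕ → ℂ} {RF RG r : ℝ} {z : ℂ}
    (hr : 0 < r) (hrF : r < RF) (hz : ‖z‖ < r * RG)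
    (hF : ∀ w : ℂ, ‖w‖ < RF → HasSum (fun n => A n * w ^ n) (F w))
    (hG : ∀ w : ℂ, ‖w‖ < RG → HasSum (fun n => B n * w ^ n) (G w)) :
    HasSum (fun n => A n * B n * z ^ n)
      ((2 * π * I)⁻¹ * ∮ u in C(0, r), F u * G (z / u) / u) := by
  have hterm (nm : ℕ × ℕ) :
      (∮ u in C(0, r), A nm.1 * u ^ nm.1 * (B nm.2 * (z / u) ^ nm.2) / u) =
        if nm.1 = nm.2 then 2 * π * I * (A nm.1 * B nm.1 * z ^ nm.1) else 0 := by
    obtain ⟨n, m⟩ := nm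
    calc (∮ u in C(0, r), A n * u ^ n * (B m * (z / u) ^ m) / u)
        = ∮ u in C(0, r), A n * B m * (u ^ n * (z / u) ^ m / u) := by
          congr 1; funext u; ring
      _ = _ := by
          rw [circleIntegral.integral_const_mul, circleIntegral_pow_mul_div_pow_div hr]
          split_ifs with hnm
          · subst hnm; ring
          · rw [mul_zero]
  have hexpand := hasSum_circleIntegral_mul_comp_div hr hrF hz hF hG
  simp only [hterm] at hexpand
  have hdiag := (Function.Injective.hasSum_iff (g := fun n : ℕ => (n, n))
    (fun _ _ h => congrArg Prod.fst h) ?_).2 hexpand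
  · simpa only [Function.comp_def, if_true, inv_mul_cancel_left₀ two_pi_I_ne_zero] using
      hdiag.mul_left (2 * π * I)⁻¹
  · rintro ⟨n, m⟩ hnm
    exact if_neg fun (h : n = m) => hnm ⟨n, by rw [h]⟩

/-- Exponential eñe convolution formula: under the same radius conditions as the
Pincherle formula, `(F ⋆ₑ G)(z) = −(1/2πi) ∮_{|u|=r} F′(u) G(z/u) du`. -/
theorem eneE_convolution (F G : ℂ → ℂ) (A B : ℕ → ℂ) (RF RG r : ℝ) (z : ℂ)
    (hr : 0 < r) (hrF : r < RF) (hz : ‖z‖ < r * RG)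
    (hF : ∀ w : ℂ, ‖w‖ < RF → HasSum (fun n => A n * w ^ n) (F w))
    (hG : ∀ w : ℂ, ‖w‖ < RG → HasSum (fun n => B n * w ^ n) (G w)) :
    ∑' n : ℕ, -(n : ℂ) * A n * B n * z ^ n =
      -((2 * Real.pi * I)⁻¹ * circleIntegral (fun u => deriv F u * G (z / u)) 0 r) := by
  have hEuler (w : ℂ) (hw : ‖w‖ < RF) :
      HasSum (fun n : ℕ => (n : ℂ) * A n * w ^ n) (w * deriv F w) :=
    hasSum_mul_deriv_of_forall_hasSum hF hw
  have hcancel : EqOn (fun u => u * deriv F u * G (z / u) / u) (fun u => deriv F u * G (z / u))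
      (sphere 0 r) := fun u hu => by
    field_simp [ne_of_mem_sphere hu hr.ne']
  have hP := hasSum_mul_mul_pow_eq_circleIntegral hr hrF hz hEuler hG
  rw [circleIntegral.integral_congr hr.le hcancel] at hP
  simpa only [neg_mul] using hP.neg.tsum_eq
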